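/- arXiv:2602.10310 — 4 statements merged into one kernel-verified Lean document; each statement's English description precedes it below -/
import Mathlib

section
/- Let X be an infinite irreducible topological space in which every singleton is closed and which has only countably many closed subsets. Let (pₙ)ₙ∈ℕ be a sequence in X whose set of terms is dense in X. Then there exists a strictly increasing function σ : ℕ → ℕ such that the subsequence (p_{σ(n)}) is generic, i.e. for every closed subset Z ⊊ X the set {n ∈ ℕ : p_{σ(n)} ∈ Z} is finite. -/
/-!
Enumerate the proper closed subsets as `Z₀, Z₁, …`. By irreducibility every finite union
`Z₀ ∪ ⋯ ∪ Zₙ` is again proper and closed, so its complement is a nonempty open set; as finite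
sets are closed and proper too, the dense sequence `p` enters that complement infinitely often.
A diagonal extraction picks `σ n` increasing with `p (σ n) ∉ Z₀ ∪ ⋯ ∪ Zₙ`, so `p ∘ σ` can meet
`Zⱼ` only at indices `n < j`.
-/

open Set Filter

namespace IrreducibleSpace

variable {X : Type*} [TopologicalSpace X] [IrreducibleSpace X]

theorem union_ne_univ {A B : Set X} (hA : IsClosed A) (hB : IsClosed B) (hAu : A ≠ univ)
    (hBu : B ≠ univ) : A ∪ B ≠ univ := by
  intro h
  rcases (isPreirreducible_iff_isClosed_union_isClosed.1 (isIrreducible_univ X).isPreirreducible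
    A B hA hB h.ge) with hA' | hB'
  · exact hAu (univ_subset_iff.1 hA')
  · exact hBu (univ_subset_iff.1 hB')

theorem biUnion_ne_univ {ι : Type*} (s : Finset ι) {Z : ι → Set X}
    (hcl : ∀ i ∈ s, IsClosed (Z i)) (hne : ∀ i ∈ s, Z i ≠ univ) : ⋃ i ∈ s, Z i ≠ univ := by
  classical
  induction s using Finset.induction_on with
  | empty => simpa using empty_ne_univ
  | insert a s has ih =>
    rw [Finset.forall_mem_insert] at hcl hne
    rw [Finset.set_biUnion_insert]
    exact union_ne_univ hcl.1 (s.finite_toSet.isClosed_biUnion hcl.2) hne.1 (ih hcl.2 hne.2)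

theorem infinite_setOf_notMem_of_denseRange [T1Space X] [Infinite X] {ι : Type*} {p : ι → X}
    (hp : DenseRange p) {W : Set X} (hW : IsClosed W) (hWu : W ≠ univ) :
    {i | p i ∉ W}.Infinite := by
  intro hfin
  have hcover : range p ⊆ W ∪ p '' {i | p i ∉ W} := by
    rintro _ ⟨i, rfl⟩
    by_cases hi : p i ∈ W
    · exact Or.inl hi
    · exact Or.inr (mem_image_of_mem p hi)
  have hF : (p '' {i | p i ∉ W}).Finite := hfin.image p
  refine union_ne_univ hW hF.isClosed hWu (fun hFu => infinite_univ (hFu ▸ hF)) ?_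
  exact univ_subset_iff.1 (hp.closure_eq ▸ closure_minimal hcover (hW.union hF.isClosed))

end IrreducibleSpace

theorem exists_strictMono_finite_setOf_mem {X : Type*} {p : ℕ → X} {Z : ℕ → Set X}
    (h : ∀ n, {k | p k ∉ ⋃ j ∈ Finset.range (n + 1), Z j}.Infinite) :
    ∃ σ : ℕ → ℕ, StrictMono σ ∧ ∀ j, {n | p (σ n) ∈ Z j}.Finite := by
  obtain ⟨σ, hσ, hmiss⟩ :=
    extraction_forall_of_frequently fun n => Nat.frequently_atTop_iff_infinite.2 (h n)
  refine ⟨σ, hσ, fun j => (finite_lt_nat j).subset fun n hn => show n < j from ?_⟩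
  exact not_le.1 fun hjn => hmiss n (mem_biUnion (Finset.mem_range_succ_iff.2 hjn) hn)

/-- From a dense sequence in an infinite irreducible topological space with closed points and
only countably many closed subsets, one can extract a generic subsequence: one meeting every
proper closed subset only finitely many times. -/
theorem exists_generic_subsequence (X : Type*) [TopologicalSpace X] [Infinite X]
    [IrreducibleSpace X] [T1Space X] (hcount : {S : Set X | IsClosed S}.Countable)
    (p : ℕ → X) (hdense : Dense (Set.range p)) :
    ∃ σ : ℕ → ℕ, StrictMono σ ∧
      ∀ Z : Set X, IsClosed Z → Z ≠ Set.univ → {n : ℕ | p (σ n) ∈ Z}.Finite := by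
  have hproper : {S : Set X | IsClosed S ∧ S ≠ univ}.Countable := hcount.mono fun _ hS => hS.1
  obtain ⟨Z, hZ⟩ := hproper.exists_eq_range ⟨∅, isClosed_empty, empty_ne_univ⟩
  have hZproper : ∀ j, Z j ∈ {S : Set X | IsClosed S ∧ S ≠ univ} := fun j => hZ ▸ mem_range_self j
  obtain ⟨σ, hσ, hfin⟩ := exists_strictMono_finite_setOf_mem fun n =>
    IrreducibleSpace.infinite_setOf_notMem_of_denseRange hdense
      ((Finset.range (n + 1)).finite_toSet.isClosed_biUnion fun j _ => (hZproper j).1)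
      (IrreducibleSpace.biUnion_ne_univ _ (fun j _ => (hZproper j).1) fun j _ => (hZproper j).2)
  refine ⟨σ, hσ, fun W hW hWu => ?_⟩
  obtain ⟨j, rfl⟩ : W ∈ range Z := hZ ▸ ⟨hW, hWu⟩
  exact hfin j
end

section
/- Let f be a regular polynomial automorphism of ℂ² of degree d. Then for every q ∈ ℂ² the limit G⁺_f(q) := lim_{n→∞} d^{−n} log⁺ max(|fⁿ(q)₁|, |fⁿ(q)₂|) exists, the function G⁺_f : ℂ² → ℝ is continuous and nonnegative, and it satisfies the functional equation G⁺_f(f(q)) = d · G⁺_f(q) for every q ∈ ℂ². The analogous statements hold for the backward Green function G⁻_f(q) := lim_{n→∞} e^{−n} log⁺ max(|f^{−n}(q)₁|, |f^{−n}(q)₂|), where e = deg f⁻¹, which satisfies G⁻_f(f⁻¹(q)) = e · G⁻_f(q). -/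
open MvPolynomial Filter

noncomputable section

/-- Polynomials in two variables over ℂ. -/
abbrev Poly2 : Type := MvPolynomial (Fin 2) ℂ

/-- The polynomial map `ℂ² → ℂ²` with components `P, Q`. -/
def evalPair (P Q : Poly2) (z : ℂ × ℂ) : ℂ × ℂ :=
  (eval ![z.1, z.2] P, eval ![z.1, z.2] Q)

/-- The degree of the pair `(P, Q)`. -/
def degPair (P Q : Poly2) : ℕ := max P.totalDegree Q.totalDegree

/-- Evaluation at `(x,y)` of the degree-`d` homogeneous part of `F`. -/
def evalHom (d : ℕ) (F : Poly2) (x y : ℂ) : ℂ :=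
  eval ![x, y] (homogeneousComponent d F)

/-- `(P,Q)` and `(P',Q')` define mutually inverse polynomial maps of `ℂ²`. -/
def IsInverseQuad (P Q P' Q' : Poly2) : Prop :=
  (∀ z, evalPair P' Q' (evalPair P Q z) = z) ∧
  (∀ z, evalPair P Q (evalPair P' Q' z) = z)

/-- The polynomial automorphism with components `(P,Q)` and inverse `(P',Q')` is regular. -/
def IsRegularQuad (P Q P' Q' : Poly2) : Prop :=
  2 ≤ degPair P Q ∧ 2 ≤ degPair P' Q' ∧
  ∀ x y : ℂ, (x, y) ≠ ((0 : ℂ), (0 : ℂ)) →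
    ¬(evalHom (degPair P Q) P x y = 0 ∧ evalHom (degPair P Q) Q x y = 0 ∧
      evalHom (degPair P' Q') P' x y = 0 ∧ evalHom (degPair P' Q') Q' x y = 0)

/-- The (constant) Jacobian determinant of the polynomial map `(P,Q)`. -/
def Jac2 (P Q : Poly2) : ℂ :=
  eval ![0, 0] (pderiv 0 P * pderiv 1 Q - pderiv 1 P * pderiv 0 Q)

/-- The set of periodic points of the polynomial map `(P,Q)`. -/
def PerSet (P Q : Poly2) : Set (ℂ × ℂ) :=
  {z | ∃ n : ℕ, 1 ≤ n ∧ (evalPair P Q)^[n] z = z}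

/-- `log⁺ t = max (log t) 0`. -/
def logPlus (t : ℝ) : ℝ := max (Real.log t) 0

/-- Composition `F(R, S)` of a polynomial with a pair of polynomials. -/
def pcomp (F R S : Poly2) : Poly2 := aeval ![R, S] F

/-- The pair of polynomials representing the `n`-th iterate of the map `(P,Q)`. -/
def iterPair (P Q : Poly2) : ℕ → Poly2 × Poly2
  | 0 => (X 0, X 1)
  | n + 1 => (pcomp P (iterPair P Q n).1 (iterPair P Q n).2,
      pcomp Q (iterPair P Q n).1 (iterPair P Q n).2)

/-- The degree of the `n`-th iterate of `(P,Q)`. -/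
def degIter (P Q : Poly2) (n : ℕ) : ℕ := degPair (iterPair P Q n).1 (iterPair P Q n).2

/-!
Outside a large ball every point is expanded, at rate `‖z‖ ^ d` by `f` or at rate `‖z‖ ^ e` by
`f⁻¹`: the top-degree parts of `f` and `f⁻¹` have no common zero on the compact unit sphere and
dominate the lower-order terms far out. Hence the region
`V = {‖z‖ ≤ R} ∪ {c ‖z‖ ^ d ≤ ‖f z‖}` is forward invariant, `f` halves the norm of every point
that it maps out of `V`, so each orbit starting in a ball of radius `R 2 ^ N` lies in `V` after
`N` steps, and on `V` the defect `|log⁺ ‖f z‖ - d log⁺ ‖z‖|` is bounded. Therefore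
`d⁻ⁿ log⁺ ‖fⁿ z‖` is Cauchy at a geometric rate, locally uniformly in `z`; its limit is continuous
and satisfies `G ∘ f = d G`. Exchanging `f` and `f⁻¹` gives the backward Green function.
-/

open Set Topology Real

namespace MvPolynomial

variable {σ 𝕜 : Type*}

theorem totalDegree_sub_homogeneousComponent_le {R : Type*} [CommRing R] {p : MvPolynomial σ R}
    {D : ℕ} (hD : p.totalDegree ≤ D) : (p - homogeneousComponent D p).totalDegree ≤ D - 1 := by
  refine Finset.sup_le fun s hs => ?_
  rw [mem_support_iff, coeff_sub, coeff_homogeneousComponent] at hs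
  have hsp : s ∈ p.support := mem_support_iff.mpr fun h => by simp [h] at hs
  have hne : s.degree ≠ D := fun h => by simp [h] at hs
  have := (le_totalDegree hsp).trans hD
  change s.degree ≤ D - 1
  change s.degree ≤ D at this
  omega

variable [Fintype σ]

theorem IsHomogeneous.eval_smul {R : Type*} [CommSemiring R] {p : MvPolynomial σ R} {n : ℕ}
    (hp : p.IsHomogeneous n) (t : R) (x : σ → R) : eval (t • x) p = t ^ n * eval x p := by
  rw [eval_eq', eval_eq', Finset.mul_sum]
  refine Finset.sum_congr rfl fun s hs => ?_
  simp_rw [Pi.smul_apply, smul_eq_mul, mul_pow, Finset.prod_mul_distrib,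
    Finset.prod_pow_eq_pow_sum, ← Finsupp.degree_eq_sum, Finsupp.degree_apply,
    ← hp.degree_eq_sum_deg_support hs]
  ring

theorem exists_norm_eval_le [NormedField 𝕜] (p : MvPolynomial σ 𝕜) {D : ℕ}
    (hD : p.totalDegree ≤ D) : ∃ C, ∀ x : σ → 𝕜, ‖eval x p‖ ≤ C * max 1 ‖x‖ ^ D := by
  refine ⟨∑ s ∈ p.support, ‖coeff s p‖, fun x => ?_⟩
  rw [eval_eq', Finset.sum_mul]
  refine (norm_sum_le _ _).trans (Finset.sum_le_sum fun s hs => ?_)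
  rw [norm_mul, norm_prod]
  gcongr
  calc ∏ i, ‖x i ^ s i‖ ≤ ∏ i, max 1 ‖x‖ ^ s i := by
        gcongr with i; rw [norm_pow]; gcongr; exact (norm_le_pi_norm x i).trans (le_max_right _ _)
    _ = max 1 ‖x‖ ^ s.degree := by rw [Finset.prod_pow_eq_pow_sum, Finsupp.degree_eq_sum]
    _ ≤ max 1 ‖x‖ ^ D := pow_le_pow_right₀ (le_max_left _ _) ((le_totalDegree hs).trans hD)

theorem exists_norm_eval_sub_homogeneousComponent_le [NormedField 𝕜] (p : MvPolynomial σ 𝕜)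
    {D : ℕ} (hD : p.totalDegree ≤ D) : ∃ B, ∀ x : σ → 𝕜,
      ‖eval x p - eval x (homogeneousComponent D p)‖ ≤ B * max 1 ‖x‖ ^ (D - 1) := by
  simpa only [map_sub] using exists_norm_eval_le _ (totalDegree_sub_homogeneousComponent_le hD)

theorem exists_pos_mul_pow_le_norm_eval_of_isHomogeneous [RCLike 𝕜] {ι : Type*} [Fintype ι]
    {p : ι → MvPolynomial σ 𝕜} {n : ι → ℕ} (hp : ∀ i, (p i).IsHomogeneous (n i))
    (hzero : ∀ x ≠ 0, ∃ i, eval x (p i) ≠ 0) :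
    ∃ c > 0, ∀ x ≠ 0, ∃ i, c * ‖x‖ ^ n i ≤ ‖eval x (p i)‖ := by
  have hcont : Continuous fun v : σ → 𝕜 => ‖fun i => eval v (p i)‖ :=
    (continuous_pi fun i => continuous_eval (p i)).norm
  obtain ⟨c, hc, hcv⟩ := (isCompact_sphere (0 : σ → 𝕜) 1).exists_forall_le' hcont.continuousOn
    (a := 0) fun v hv => by
      obtain ⟨i, hi⟩ := hzero v (ne_zero_of_mem_sphere one_ne_zero ⟨v, hv⟩)
      exact norm_pos_iff.mpr fun h => hi (congrFun h i)
  refine ⟨c, hc, fun x hx => ?_⟩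
  set v : σ → 𝕜 := (‖x‖⁻¹ : 𝕜) • x
  have hv : v ∈ Metric.sphere (0 : σ → 𝕜) 1 := by simpa [v] using norm_smul_inv_norm hx
  have hxv : x = (‖x‖ : 𝕜) • v := by
    rw [smul_smul, mul_inv_cancel₀ (RCLike.ofReal_ne_zero.mpr (norm_ne_zero_iff.mpr hx)), one_smul]
  obtain ⟨i, hi⟩ : ∃ i, c ≤ ‖eval v (p i)‖ := by
    by_contra! h
    exact (hcv v hv).not_gt ((pi_norm_lt_iff hc).mpr h)
  refine ⟨i, ?_⟩
  rw [hxv, (hp i).eval_smul, norm_mul, norm_pow, RCLike.norm_ofReal, abs_norm, norm_smul,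
    RCLike.norm_ofReal, abs_norm, (mem_sphere_zero_iff_norm.mp hv), mul_one, mul_comm]
  gcongr

theorem exists_half_mul_pow_le_norm_eval [NormedField 𝕜] (p : MvPolynomial σ 𝕜) {D : ℕ}
    (hD : p.totalDegree ≤ D) (hD1 : 1 ≤ D) {c : ℝ} (hc : 0 < c) :
    ∃ R, ∀ x : σ → 𝕜, R ≤ ‖x‖ → c * ‖x‖ ^ D ≤ ‖eval x (homogeneousComponent D p)‖ →
      c / 2 * ‖x‖ ^ D ≤ ‖eval x p‖ := by
  obtain ⟨B, hB⟩ := exists_norm_eval_sub_homogeneousComponent_le p hD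
  refine ⟨max 1 (2 * B / c), fun x hx hbig => ?_⟩
  have hx1 : 1 ≤ ‖x‖ := (le_max_left _ _).trans hx
  have hBx : B ≤ c / 2 * ‖x‖ := by
    have := (le_max_right _ _).trans hx
    rw [div_le_iff₀ hc] at this
    linarith
  have hlow := hB x
  rw [max_eq_right hx1] at hlow
  have hpow : ‖x‖ ^ D = ‖x‖ ^ (D - 1) * ‖x‖ := by rw [← pow_succ, Nat.sub_add_cancel hD1]
  have htri := norm_sub_norm_le (eval x (homogeneousComponent D p)) (eval x p)
  rw [norm_sub_rev] at htri
  nlinarith [pow_nonneg (norm_nonneg x) (D - 1)]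

theorem exists_pos_mul_pow_le_norm_eval [RCLike 𝕜] {ι : Type*} [Fintype ι]
    {p : ι → MvPolynomial σ 𝕜} {n : ι → ℕ} (hdeg : ∀ i, (p i).totalDegree ≤ n i)
    (hn : ∀ i, 1 ≤ n i) (hzero : ∀ x ≠ 0, ∃ i, eval x (homogeneousComponent (n i) (p i)) ≠ 0) :
    ∃ c > 0, ∃ R, ∀ x : σ → 𝕜, R ≤ ‖x‖ → ∃ i, c * ‖x‖ ^ n i ≤ ‖eval x (p i)‖ := by
  obtain ⟨c, hc, htop⟩ := exists_pos_mul_pow_le_norm_eval_of_isHomogeneous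
    (fun i => homogeneousComponent_isHomogeneous (n i) (p i)) hzero
  choose R hR using fun i => exists_half_mul_pow_le_norm_eval (p i) (hdeg i) (hn i) hc
  obtain ⟨M, hM⟩ := Finite.exists_le R
  refine ⟨c / 2, half_pos hc, max 1 M, fun x hx => ?_⟩
  have hx0 : x ≠ 0 := norm_pos_iff.mp (one_pos.trans_le ((le_max_left _ _).trans hx))
  obtain ⟨i, hi⟩ := htop x hx0
  exact ⟨i, hR i x ((hM i).trans ((le_max_right _ _).trans hx)) hi⟩

end MvPolynomial

section GreenLimit

variable {X : Type*} {F : X → X} {h : X → ℝ} {d C : ℝ} {Ω : Set X}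

def greenApprox (F : X → X) (h : X → ℝ) (d : ℝ) (n : ℕ) (x : X) : ℝ := (d ^ n)⁻¹ * h (F^[n] x)

theorem greenApprox_apply_map (hd : d ≠ 0) (n : ℕ) (x : X) :
    greenApprox F h d n (F x) = d * greenApprox F h d (n + 1) x := by
  rw [greenApprox, greenApprox, ← Function.iterate_succ_apply, pow_succ]
  field_simp

theorem dist_greenApprox_succ_le (hd : 1 < d) (hΩ : MapsTo F Ω Ω)
    (hstep : ∀ x ∈ Ω, |h (F x) - d * h x| ≤ C) {N : ℕ} {x : X} (hx : F^[N] x ∈ Ω) (k : ℕ) :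
    dist (greenApprox F h d (k + N) x) (greenApprox F h d (k + 1 + N) x)
      ≤ C / d * (d⁻¹) ^ N * (d⁻¹) ^ k := by
  have hd0 : 0 < d := zero_lt_one.trans hd
  set n := k + N
  have hxn : F^[n] x ∈ Ω := by
    rw [Function.iterate_add_apply]
    exact hΩ.iterate k hx
  have hdiff : greenApprox F h d (n + 1) x - greenApprox F h d n x
      = (d ^ (n + 1))⁻¹ * (h (F (F^[n] x)) - d * h (F^[n] x)) := by
    rw [greenApprox, greenApprox, Function.iterate_succ_apply', pow_succ]
    field_simp
  rw [add_right_comm, dist_comm, Real.dist_eq, hdiff, abs_mul, abs_of_pos (by positivity)]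
  calc (d ^ (n + 1))⁻¹ * |h (F (F^[n] x)) - d * h (F^[n] x)| ≤ (d ^ (n + 1))⁻¹ * C := by
        gcongr; exact hstep _ hxn
    _ = C / d * (d⁻¹) ^ N * (d⁻¹) ^ k := by
        rw [pow_succ, inv_pow, inv_pow, pow_add]; field_simp

theorem exists_tendsto_greenApprox (hd : 1 < d) (hΩ : MapsTo F Ω Ω)
    (hstep : ∀ x ∈ Ω, |h (F x) - d * h x| ≤ C) {N : ℕ} {x : X} (hx : F^[N] x ∈ Ω) :
    ∃ a, Tendsto (greenApprox F h d · x) atTop (𝓝 a) := by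
  have hr : d⁻¹ < 1 := inv_lt_one_of_one_lt₀ hd
  have hcauchy : CauchySeq fun k => greenApprox F h d (k + N) x :=
    cauchySeq_of_le_geometric _ _ hr (dist_greenApprox_succ_le hd hΩ hstep hx)
  obtain ⟨a, ha⟩ := cauchySeq_tendsto_of_complete hcauchy
  exact ⟨a, (tendsto_add_atTop_iff_nat N).mp ha⟩

theorem dist_greenApprox_le_of_tendsto (hd : 1 < d) (hΩ : MapsTo F Ω Ω)
    (hstep : ∀ x ∈ Ω, |h (F x) - d * h x| ≤ C) {N n : ℕ} {x : X} (hx : F^[N] x ∈ Ω) {a : ℝ}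
    (ha : Tendsto (greenApprox F h d · x) atTop (𝓝 a)) (hn : N ≤ n) :
    dist (greenApprox F h d n x) a ≤ C / (d - 1) * (d⁻¹) ^ n := by
  have hr : d⁻¹ < 1 := inv_lt_one_of_one_lt₀ hd
  obtain ⟨k, rfl⟩ := Nat.exists_eq_add_of_le' hn
  have := dist_le_of_le_geometric_of_tendsto _ _ hr (dist_greenApprox_succ_le hd hΩ hstep hx)
    ((tendsto_add_atTop_iff_nat N).mpr ha) k
  refine this.trans_eq ?_
  have hd1 : d - 1 ≠ 0 := sub_ne_zero.mpr hd.ne'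
  have hd0 : d ≠ 0 := (zero_lt_one.trans hd).ne'
  rw [pow_add]
  field_simp

theorem exists_continuous_tendsto_greenApprox [TopologicalSpace X] (hF : Continuous F)
    (hh : Continuous h) (hd : 1 < d) (hΩ : MapsTo F Ω Ω)
    (hstep : ∀ x ∈ Ω, |h (F x) - d * h x| ≤ C) (habsorb : ∀ x, ∃ N, F^[N] ⁻¹' Ω ∈ 𝓝 x) :
    ∃ G : X → ℝ, Continuous G ∧ (∀ x, Tendsto (greenApprox F h d · x) atTop (𝓝 (G x))) ∧
      ∀ x, G (F x) = d * G x := by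
  choose G hG using fun x => exists_tendsto_greenApprox hd hΩ hstep
    (mem_preimage.mp (mem_of_mem_nhds (habsorb x).choose_spec))
  have hbound : Tendsto (fun n : ℕ => C / (d - 1) * (d⁻¹) ^ n) atTop (𝓝 0) := by
    simpa using (tendsto_pow_atTop_nhds_zero_of_lt_one (inv_nonneg.mpr (zero_lt_one.trans hd).le)
      (inv_lt_one_of_one_lt₀ hd)).const_mul (C / (d - 1))
  have hunif : ∀ x, ∃ t ∈ 𝓝 x, TendstoUniformlyOn (greenApprox F h d) G atTop t := by
    intro x
    obtain ⟨N, hN⟩ := habsorb x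
    refine ⟨_, hN, Metric.tendstoUniformlyOn_iff.mpr fun ε hε => ?_⟩
    filter_upwards [hbound.eventually (gt_mem_nhds hε), eventually_ge_atTop N] with n hn hNn y hy
    rw [dist_comm]
    exact (dist_greenApprox_le_of_tendsto hd hΩ hstep hy (hG y) hNn).trans_lt hn
  have hcont : ∀ n, Continuous (greenApprox F h d n) := fun n =>
    continuous_const.mul (hh.comp (hF.iterate n))
  refine ⟨G, (tendstoLocallyUniformly_of_forall_exists_nhds hunif).continuous
    (Frequently.of_forall hcont), hG, fun x => tendsto_nhds_unique (hG (F x)) ?_⟩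
  simpa only [greenApprox_apply_map (zero_lt_one.trans hd).ne'] using
    ((tendsto_add_atTop_iff_nat 1).mpr (hG x)).const_mul d

end GreenLimit

theorem abs_log_sub_mul_log_le {a b s t : ℝ} {n : ℕ} (ha : 0 < a) (ht : 0 < t)
    (hlow : a * t ^ n ≤ s) (hup : s ≤ b * t ^ n) : |log s - n * log t| ≤ max |log a| |log b| := by
  have htn : 0 < t ^ n := pow_pos ht n
  have hs : 0 < s := (mul_pos ha htn).trans_le hlow
  rw [← log_pow, ← log_div hs.ne' htn.ne']
  exact abs_le_max_abs_abs (log_le_log ha ((le_div_iff₀ htn).mpr hlow))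
    (log_le_log (div_pos hs htn) ((div_le_iff₀ htn).mpr hup))

section TrapRegion

variable {E : Type*} [NormedAddCommGroup E] {F G : E → E} {c R : ℝ} {d e : ℕ}

def GrowthAlternative (F G : E → E) (c : ℝ) (d e : ℕ) (R : ℝ) : Prop :=
  ∀ z, R ≤ ‖z‖ → c * ‖z‖ ^ d ≤ ‖F z‖ ∨ c * ‖z‖ ^ e ≤ ‖G z‖

theorem GrowthAlternative.symm (h : GrowthAlternative F G c d e R) :
    GrowthAlternative G F c e d R :=
  fun z hz => (h z hz).symm

theorem GrowthAlternative.mono {R' : ℝ} (h : GrowthAlternative F G c d e R) (hR : R ≤ R') :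
    GrowthAlternative F G c d e R' :=
  fun z hz => h z (hR.trans hz)

def trapRegion (F : E → E) (c : ℝ) (d : ℕ) (R : ℝ) : Set E :=
  {w | ‖w‖ ≤ R ∨ c * ‖w‖ ^ d ≤ ‖F w‖}

theorem two_mul_le_mul_pow {x : ℝ} {k : ℕ} (hR : 1 ≤ R) (hcR : 2 ≤ c * R) (hx : R ≤ x)
    (hk : 2 ≤ k) : 2 * x ≤ c * x ^ k := by
  have hc : 0 ≤ c := by nlinarith
  have hx1 : 1 ≤ x := hR.trans hx
  calc 2 * x ≤ c * R * x := by gcongr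
    _ ≤ c * x * x := by gcongr
    _ = c * x ^ 2 := by ring
    _ ≤ c * x ^ k := by gcongr

theorem two_mul_norm_le_of_apply_notMem_trapRegion (hGF : ∀ z, G (F z) = z) (hR : 1 ≤ R)
    (hcR : 2 ≤ c * R) (he : 2 ≤ e) (hL : GrowthAlternative F G c d e R) {z : E}
    (hz : F z ∉ trapRegion F c d R) : 2 * ‖F z‖ ≤ ‖z‖ := by
  simp only [trapRegion, mem_ofPred_eq, not_or, not_le] at hz
  obtain ⟨hbig, hslow⟩ := hz
  rcases hL (F z) hbig.le with hfast | hback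
  · exact absurd hfast hslow.not_ge
  · rw [hGF] at hback
    exact (two_mul_le_mul_pow hR hcR hbig.le he).trans hback

theorem mapsTo_trapRegion (hGF : ∀ z, G (F z) = z) (hR : 1 ≤ R) (hcR : 2 ≤ c * R)
    (hd : 2 ≤ d) (he : 2 ≤ e) (hL : GrowthAlternative F G c d e R) :
    MapsTo F (trapRegion F c d R) (trapRegion F c d R) := by
  intro w hw
  by_contra hFw
  have hshrink := two_mul_norm_le_of_apply_notMem_trapRegion hGF hR hcR he hL hFw
  have hbig : R < ‖F w‖ := by
    simp only [trapRegion, mem_ofPred_eq, not_or, not_le] at hFw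
    exact hFw.1
  rcases le_or_gt ‖w‖ R with hsmall | hlarge
  · linarith
  · have hfast := hw.resolve_left hlarge.not_ge
    have := two_mul_le_mul_pow hR hcR hlarge.le hd
    linarith

theorem iterate_mem_trapRegion (hGF : ∀ z, G (F z) = z) (hR : 1 ≤ R) (hcR : 2 ≤ c * R)
    (hd : 2 ≤ d) (he : 2 ≤ e) (hL : GrowthAlternative F G c d e R) (N : ℕ) {z : E}
    (hz : ‖z‖ ≤ R * 2 ^ N) : F^[N] z ∈ trapRegion F c d R := by
  induction N generalizing z with
  | zero => exact Or.inl (by simpa using hz)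
  | succ N ih =>
    rw [Function.iterate_succ_apply]
    by_cases hFz : F z ∈ trapRegion F c d R
    · exact (mapsTo_trapRegion hGF hR hcR hd he hL).iterate N hFz
    · have := two_mul_norm_le_of_apply_notMem_trapRegion hGF hR hcR he hL hFz
      exact ih (by rw [pow_succ] at hz; linarith)

theorem abs_posLog_norm_sub_le_of_mem_trapRegion {A : ℝ} (hA : ∀ z, ‖F z‖ ≤ A * max 1 ‖z‖ ^ d)
    (hc : 0 < c) (hR : 1 ≤ R) {w : E} (hw : w ∈ trapRegion F c d R) :
    |log⁺ ‖F w‖ - d * log⁺ ‖w‖| ≤ max |log (min c (R ^ d)⁻¹)| |log (max A 1)| := by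
  rw [posLog_eq_log_max_one (norm_nonneg _), posLog_eq_log_max_one (norm_nonneg _)]
  refine abs_log_sub_mul_log_le (lt_min hc (by positivity)) (one_pos.trans_le (le_max_left _ _))
    ?_ ?_
  · rcases le_or_gt ‖w‖ R with hsmall | hlarge
    · calc min c (R ^ d)⁻¹ * max 1 ‖w‖ ^ d ≤ (R ^ d)⁻¹ * R ^ d := by
            gcongr
            · exact min_le_right _ _
            · exact max_le hR hsmall
        _ = 1 := inv_mul_cancel₀ (by positivity)
        _ ≤ max 1 ‖F w‖ := le_max_left _ _
    · rw [max_eq_right (hR.trans hlarge.le)]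
      calc min c (R ^ d)⁻¹ * ‖w‖ ^ d ≤ c * ‖w‖ ^ d := by gcongr; exact min_le_left _ _
        _ ≤ ‖F w‖ := hw.resolve_left hlarge.not_ge
        _ ≤ max 1 ‖F w‖ := le_max_right _ _
  · have hpow : 1 ≤ max 1 ‖w‖ ^ d := one_le_pow₀ (le_max_left _ _)
    refine max_le (one_le_mul_of_one_le_of_one_le (le_max_right _ _) hpow) ((hA w).trans ?_)
    gcongr
    exact le_max_left _ _

theorem exists_green_function_of_growthAlternative {A : ℝ} (hF : Continuous F)
    (hGF : ∀ z, G (F z) = z) (hd : 2 ≤ d) (he : 2 ≤ e) (hA : ∀ z, ‖F z‖ ≤ A * max 1 ‖z‖ ^ d)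
    (hc : 0 < c) (hL : GrowthAlternative F G c d e R) :
    ∃ Gp : E → ℝ, Continuous Gp ∧ (∀ x, 0 ≤ Gp x) ∧
      (∀ x, Tendsto (fun n : ℕ => ((d : ℝ) ^ n)⁻¹ * log⁺ ‖F^[n] x‖) atTop (𝓝 (Gp x))) ∧
      ∀ x, Gp (F x) = d * Gp x := by
  -- beyond `R₁`, `c * x ^ k ≥ 2 * x` for every `k ≥ 2` (see `two_mul_le_mul_pow`)
  set R₁ := max (max R 1) (2 / c)
  have hR₁ : 1 ≤ R₁ := (le_max_right _ _).trans (le_max_left _ _)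
  have hcR₁ : 2 ≤ c * R₁ := by
    have := mul_le_mul_of_nonneg_left (le_max_right (max R 1) (2 / c)) hc.le
    rwa [mul_div_cancel₀ _ hc.ne'] at this
  have hL₁ := hL.mono ((le_max_left _ _).trans (le_max_left _ _) : R ≤ R₁)
  have habsorb : ∀ x : E, ∃ N, F^[N] ⁻¹' trapRegion F c d R₁ ∈ 𝓝 x := by
    intro x
    obtain ⟨N, hN⟩ := pow_unbounded_of_one_lt ‖x‖ one_lt_two
    refine ⟨N, Filter.mem_of_superset (Metric.isOpen_ball.mem_nhds (mem_ball_zero_iff.mpr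
      (hN.trans_le (le_mul_of_one_le_left (by positivity) hR₁)))) fun z hz => ?_⟩
    exact iterate_mem_trapRegion hGF hR₁ hcR₁ hd he hL₁ N (mem_ball_zero_iff.mp hz).le
  obtain ⟨Gp, hcont, hlim, hfun⟩ := exists_continuous_tendsto_greenApprox (h := fun z => log⁺ ‖z‖)
    hF (continuous_posLog.comp continuous_norm) (by exact_mod_cast hd : (1 : ℝ) < d)
    (mapsTo_trapRegion hGF hR₁ hcR₁ hd he hL₁)
    (fun w hw => abs_posLog_norm_sub_le_of_mem_trapRegion hA hc hR₁ hw) habsorb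
  exact ⟨Gp, hcont, fun x => ge_of_tendsto' (hlim x) fun n => mul_nonneg (by positivity)
    posLog_nonneg, hlim, hfun⟩

end TrapRegion

theorem norm_vecCons_fst_snd (z : ℂ × ℂ) : ‖![z.1, z.2]‖ = ‖z‖ := by
  simp [Pi.norm_def, Prod.norm_def, Fin.univ_succ]

theorem continuous_evalPair (P Q : Poly2) : Continuous (evalPair P Q) := by
  have hvec : Continuous fun z : ℂ × ℂ => ![z.1, z.2] :=
    continuous_pi fun i => by fin_cases i <;> [exact continuous_fst; exact continuous_snd]
  exact ((continuous_eval P).comp hvec).prodMk ((continuous_eval Q).comp hvec)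

theorem exists_norm_evalPair_le (P Q : Poly2) :
    ∃ A, ∀ z, ‖evalPair P Q z‖ ≤ A * max 1 ‖z‖ ^ degPair P Q := by
  obtain ⟨A, hA⟩ := exists_norm_eval_le P (le_max_left P.totalDegree Q.totalDegree)
  obtain ⟨B, hB⟩ := exists_norm_eval_le Q (le_max_right P.totalDegree Q.totalDegree)
  refine ⟨max A B, fun z => max_le ?_ ?_⟩ <;> rw [← norm_vecCons_fst_snd]
  · exact (hA _).trans (mul_le_mul_of_nonneg_right (le_max_left A B) (by positivity))
  · exact (hB _).trans (mul_le_mul_of_nonneg_right (le_max_right A B) (by positivity))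

theorem IsRegularQuad.exists_growthAlternative {P Q P' Q' : Poly2}
    (hreg : IsRegularQuad P Q P' Q') :
    ∃ c > 0, ∃ R, GrowthAlternative (evalPair P Q) (evalPair P' Q') c (degPair P Q)
      (degPair P' Q') R := by
  obtain ⟨hd, he, hzero⟩ := hreg
  obtain ⟨c, hc, R, hR⟩ := exists_pos_mul_pow_le_norm_eval (p := ![P, Q, P', Q'])
    (n := ![degPair P Q, degPair P Q, degPair P' Q', degPair P' Q'])
    (by intro i; fin_cases i <;> simp [degPair]) (by intro i; fin_cases i <;> simp <;> omega)
    (fun x hx => by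
      have hx' : ![x 0, x 1] = x := by ext i; fin_cases i <;> rfl
      by_contra! h
      refine hzero (x 0) (x 1) (fun h0 => hx ?_) ?_
      · obtain ⟨h0, h1⟩ := Prod.mk.inj h0
        rw [← hx', h0, h1]; simp
      · simp only [evalHom, hx']
        exact ⟨h 0, h 1, h 2, h 3⟩)
  refine ⟨c, hc, R, fun z hz => ?_⟩
  obtain ⟨i, hi⟩ := hR ![z.1, z.2] (by rwa [norm_vecCons_fst_snd])
  rw [norm_vecCons_fst_snd] at hi
  fin_cases i
  · exact Or.inl (hi.trans (le_max_left _ _))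
  · exact Or.inl (hi.trans (le_max_right _ _))
  · exact Or.inr (hi.trans (le_max_left _ _))
  · exact Or.inr (hi.trans (le_max_right _ _))

theorem logPlus_eq_posLog : logPlus = posLog := funext fun _ => max_comm _ _

/-- Existence, continuity, nonnegativity and the functional equation of the forward and
backward Green functions of a regular polynomial automorphism of `ℂ²`. -/
theorem green_functions_exist (P Q P' Q' : Poly2)
    (hinv : IsInverseQuad P Q P' Q') (hreg : IsRegularQuad P Q P' Q') :
    (∃ Gp : ℂ × ℂ → ℝ, Continuous Gp ∧ (∀ q, 0 ≤ Gp q) ∧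
      (∀ q : ℂ × ℂ, Tendsto (fun n : ℕ =>
          ((degPair P Q : ℝ) ^ n)⁻¹ *
            logPlus (max ‖((evalPair P Q)^[n] q).1‖
              ‖((evalPair P Q)^[n] q).2‖))
        atTop (nhds (Gp q))) ∧
      ∀ q : ℂ × ℂ, Gp (evalPair P Q q) = (degPair P Q : ℝ) * Gp q) ∧
    (∃ Gm : ℂ × ℂ → ℝ, Continuous Gm ∧ (∀ q, 0 ≤ Gm q) ∧
      (∀ q : ℂ × ℂ, Tendsto (fun n : ℕ =>
          ((degPair P' Q' : ℝ) ^ n)⁻¹ *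
            logPlus (max ‖((evalPair P' Q')^[n] q).1‖
              ‖((evalPair P' Q')^[n] q).2‖))
        atTop (nhds (Gm q))) ∧
      ∀ q : ℂ × ℂ, Gm (evalPair P' Q' q) = (degPair P' Q' : ℝ) * Gm q) := by
  obtain ⟨c, hc, R, hgrowth⟩ := hreg.exists_growthAlternative
  obtain ⟨A, hA⟩ := exists_norm_evalPair_le P Q
  obtain ⟨A', hA'⟩ := exists_norm_evalPair_le P' Q'
  rw [logPlus_eq_posLog]
  exact ⟨exists_green_function_of_growthAlternative (continuous_evalPair P Q) hinv.1 hreg.1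
      hreg.2.1 hA hc hgrowth,
    exists_green_function_of_growthAlternative (continuous_evalPair P' Q') hinv.2 hreg.2.1
      hreg.1 hA' hc hgrowth.symm⟩
end
end

section
/- Let f = (f_b) and g = (g_b) be two dynamically independent families of regular plane polynomial automorphisms parametrized by the same curve V. Then the set of parameters {b ∈ V(ℂ) : there exist integers n, m ≥ 1 with f_bⁿ = g_b^m} is countable. -/
open MvPolynomial Filter

noncomputable section

/-- The complex points `V(ℂ)` of the affine variety cut out by the ideal `I` over `K`. -/
def Vcx (K : IntermediateField ℚ ℂ) (m : ℕ) (I : Ideal (MvPolynomial (Fin m) K)) :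
    Set (Fin m → ℂ) :=
  {b | ∀ p ∈ I, eval b (MvPolynomial.map (algebraMap K ℂ) p) = 0}

/-- The `K̄`-points `V(K̄)`: points of `V(ℂ)` with all coordinates algebraic over `K`. -/
def VKbar (K : IntermediateField ℚ ℂ) (m : ℕ) (I : Ideal (MvPolynomial (Fin m) K)) :
    Set (Fin m → ℂ) :=
  {b | b ∈ Vcx K m I ∧ ∀ i, IsAlgebraic K (b i)}

/-- Specialization at the parameter `b` of a polynomial in `K[t₁,…,t_m][x,y]`. -/
def specpoly (K : IntermediateField ℚ ℂ) (m : ℕ) (b : Fin m → ℂ)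
    (F : MvPolynomial (Fin m ⊕ Fin 2) K) : Poly2 :=
  aeval (Sum.elim (fun i => MvPolynomial.C (b i)) MvPolynomial.X)
    (MvPolynomial.map (algebraMap K ℂ) F)

/-- A family of regular plane polynomial automorphisms parametrized by the curve `V`. -/
structure RegFamily (K : IntermediateField ℚ ℂ) (m : ℕ)
    (I : Ideal (MvPolynomial (Fin m) K)) where
  P : MvPolynomial (Fin m ⊕ Fin 2) K
  Q : MvPolynomial (Fin m ⊕ Fin 2) K
  P' : MvPolynomial (Fin m ⊕ Fin 2) K
  Q' : MvPolynomial (Fin m ⊕ Fin 2) K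
  isAuto : ∀ b ∈ Vcx K m I,
    IsInverseQuad (specpoly K m b P) (specpoly K m b Q)
      (specpoly K m b P') (specpoly K m b Q') ∧
    IsRegularQuad (specpoly K m b P) (specpoly K m b Q)
      (specpoly K m b P') (specpoly K m b Q')

/-- The map `f_b : ℂ² → ℂ²` at the parameter `b`. -/
def famMap {K : IntermediateField ℚ ℂ} {m : ℕ} {I : Ideal (MvPolynomial (Fin m) K)}
    (f : RegFamily K m I) (b : Fin m → ℂ) : ℂ × ℂ → ℂ × ℂ :=
  evalPair (specpoly K m b f.P) (specpoly K m b f.Q)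

/-- The set of periodic points of `f_b`. -/
def famPer {K : IntermediateField ℚ ℂ} {m : ℕ} {I : Ideal (MvPolynomial (Fin m) K)}
    (f : RegFamily K m I) (b : Fin m → ℂ) : Set (ℂ × ℂ) :=
  PerSet (specpoly K m b f.P) (specpoly K m b f.Q)

/-- The Jacobian of `f_b`. -/
def famJac {K : IntermediateField ℚ ℂ} {m : ℕ} {I : Ideal (MvPolynomial (Fin m) K)}
    (f : RegFamily K m I) (b : Fin m → ℂ) : ℂ :=
  Jac2 (specpoly K m b f.P) (specpoly K m b f.Q)

/-- Two families are dynamically independent if no iterates agree along the whole family. -/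
def DynIndependent {K : IntermediateField ℚ ℂ} {m : ℕ} {I : Ideal (MvPolynomial (Fin m) K)}
    (f g : RegFamily K m I) : Prop :=
  ¬ ∃ n k : ℕ, 1 ≤ n ∧ 1 ≤ k ∧ ∀ b ∈ Vcx K m I, (famMap f b)^[n] = (famMap g b)^[k]


/-! The condition `f_bⁿ = g_bᵏ` says that the coefficients of finitely many polynomials in
`(x, y)`, themselves polynomials in `b` over `K`, vanish at `b`. Dynamical independence yields
such a coefficient `e` that does not vanish on all of `V`, so `e ∉ I`. At a zero `b ∈ V` of `e`
the kernel of evaluation at `b` is a prime strictly containing `I`; as `V` is a curve it is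
maximal, so by Zariski's lemma the coordinates of `b` are algebraic over `K`, hence over `ℚ`.
There are only countably many such points. -/

theorem Ideal.IsPrime.isMaximal_of_lt_of_ringKrullDim_quotient_le_one {R : Type*} [CommRing R]
    {I J : Ideal R} (hI : I.IsPrime) (hdim : ringKrullDim (R ⧸ I) ≤ 1) (hJ : J.IsPrime)
    (hIJ : I < J) : J.IsMaximal := by
  have : Ring.KrullDimLE 1 (R ⧸ I) := ⟨hdim⟩
  have hker : RingHom.ker (Ideal.Quotient.mk I) ≤ J := by rw [Ideal.mk_ker]; exact hIJ.le
  have hprime := Ideal.map_isPrime_of_surjective Ideal.Quotient.mk_surjective hker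
  have hne : J.map (Ideal.Quotient.mk I) ≠ ⊥ := by
    rw [Ne, Ideal.map_eq_bot_iff_le_ker, Ideal.mk_ker]
    exact hIJ.not_ge
  have := hprime.isMaximal_of_ne_bot hne
  rw [← Ideal.comap_map_mk hIJ.le]
  exact Ideal.comap_isMaximal_of_surjective _ Ideal.Quotient.mk_surjective

namespace MvPolynomial

theorem isIntegral_aeval_of_isMaximal_ker {K A σ : Type*} [Field K] [CommRing A]
    [Algebra K A] [Finite σ] (b : σ → A) (h : (RingHom.ker (aeval (R := K) b)).IsMaximal)
    (p : MvPolynomial σ K) : IsIntegral K (aeval b p) := by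
  let := Ideal.Quotient.field (RingHom.ker (aeval (R := K) b))
  have := finite_of_finite_type_of_isJacobsonRing K
    (MvPolynomial σ K ⧸ RingHom.ker (aeval (R := K) b))
  simpa using (Algebra.IsIntegral.isIntegral (R := K) (Ideal.Quotient.mk _ p)).map
    (Ideal.kerLiftAlg (aeval (R := K) b))

variable {R σ τ : Type*} [CommSemiring R]

theorem aeval_sumElim_eq_eval_map {A : Type*} [CommSemiring A] [Algebra R A] (b : σ → A)
    (w : τ → A) (D : MvPolynomial (σ ⊕ τ) R) :
    aeval (Sum.elim b w) D =
      eval w (map (aeval b).toRingHom (sumAlgEquiv R τ σ (rename Sum.swap D))) := by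
  induction D using MvPolynomial.induction_on with
  | C r => simp [sumAlgEquiv_C_inl]
  | add p q hp hq => simp [hp, hq]
  | mul_X p i h => cases i <;> simp [h, sumAlgEquiv_X_inl, sumAlgEquiv_X_inr]

theorem forall_aeval_sumElim_eq_zero_iff {A : Type*} [CommRing A] [IsDomain A] [Infinite A]
    [Algebra R A] (b : σ → A) (D : MvPolynomial (σ ⊕ τ) R) :
    (∀ w : τ → A, aeval (Sum.elim b w) D = 0) ↔
      ∀ s, aeval b (coeff s (sumAlgEquiv R τ σ (rename Sum.swap D))) = 0 := by
  have h (p : MvPolynomial τ A) : (∀ w, eval w p = 0) ↔ p = 0 := by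
    simp [MvPolynomial.funext_iff (q := 0)]
  simp only [aeval_sumElim_eq_eval_map]
  rw [h, MvPolynomial.ext_iff]
  simp only [coeff_map, coeff_zero]
  rfl

def compXY (F G H : MvPolynomial (σ ⊕ Fin 2) R) : MvPolynomial (σ ⊕ Fin 2) R :=
  aeval (Sum.elim (X ∘ Sum.inl) ![G, H]) F

def iterateXY (P Q : MvPolynomial (σ ⊕ Fin 2) R) :
    ℕ → MvPolynomial (σ ⊕ Fin 2) R × MvPolynomial (σ ⊕ Fin 2) R
  | 0 => (X (Sum.inr 0), X (Sum.inr 1))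
  | n + 1 => (compXY P (iterateXY P Q n).1 (iterateXY P Q n).2,
      compXY Q (iterateXY P Q n).1 (iterateXY P Q n).2)

theorem aeval_compXY {A : Type*} [CommSemiring A] [Algebra R A] (b : σ → A) (w : Fin 2 → A)
    (F G H : MvPolynomial (σ ⊕ Fin 2) R) :
    aeval (Sum.elim b w) (compXY F G H) =
      aeval (Sum.elim b ![aeval (Sum.elim b w) G, aeval (Sum.elim b w) H]) F := by
  rw [compXY, comp_aeval_apply]
  congr 2
  ext (i | j)
  · simp
  · fin_cases j <;> simp

end MvPolynomial

section Parameters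

variable {K : IntermediateField ℚ ℂ} {m : ℕ}

theorem eval_specpoly (b : Fin m → ℂ) (w : Fin 2 → ℂ) (F : MvPolynomial (Fin m ⊕ Fin 2) K) :
    eval w (specpoly K m b F) = aeval (Sum.elim b w) F := by
  induction F using MvPolynomial.induction_on with
  | C r => simp [specpoly]
  | add p q hp hq => simp_all [specpoly]
  | mul_X p i h => cases i <;> simp_all [specpoly]

theorem evalPair_specpoly_iterate (b : Fin m → ℂ) (P Q : MvPolynomial (Fin m ⊕ Fin 2) K)
    (n : ℕ) (w : Fin 2 → ℂ) :
    (evalPair (specpoly K m b P) (specpoly K m b Q))^[n] (w 0, w 1) =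
      (aeval (Sum.elim b w) (iterateXY P Q n).1, aeval (Sum.elim b w) (iterateXY P Q n).2) := by
  induction n with
  | zero => simp [iterateXY]
  | succ n ih =>
    rw [Function.iterate_succ_apply', ih, evalPair]
    simp only [eval_specpoly, iterateXY, aeval_compXY]

theorem exists_polynomials_iterate_eq_iff (P Q P' Q' : MvPolynomial (Fin m ⊕ Fin 2) K)
    (n k : ℕ) : ∃ S : Set (MvPolynomial (Fin m) K), ∀ b : Fin m → ℂ,
      (evalPair (specpoly K m b P) (specpoly K m b Q))^[n] =
          (evalPair (specpoly K m b P') (specpoly K m b Q'))^[k] ↔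
        ∀ e ∈ S, aeval b e = 0 := by
  -- the coefficients of `D` viewed as a polynomial in `x, y` over `K[t₁, …, t_m]`
  let coeffs (D : MvPolynomial (Fin m ⊕ Fin 2) K) : Set (MvPolynomial (Fin m) K) :=
    Set.range fun s => coeff s (sumAlgEquiv K (Fin 2) (Fin m) (rename Sum.swap D))
  refine ⟨coeffs ((iterateXY P Q n).1 - (iterateXY P' Q' k).1) ∪
    coeffs ((iterateXY P Q n).2 - (iterateXY P' Q' k).2), fun b => ?_⟩
  have hpoints {F G : ℂ × ℂ → ℂ × ℂ} : F = G ↔ ∀ w : Fin 2 → ℂ, F (w 0, w 1) = G (w 0, w 1) :=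
    ⟨fun h w => by rw [h], fun h => funext fun z => h ![z.1, z.2]⟩
  have hsub (w : Fin 2 → ℂ) (D D' : MvPolynomial (Fin m ⊕ Fin 2) K) :
      aeval (Sum.elim b w) D = aeval (Sum.elim b w) D' ↔ aeval (Sum.elim b w) (D - D') = 0 := by
    rw [map_sub, sub_eq_zero]
  simp only [hpoints, evalPair_specpoly_iterate, Prod.ext_iff, hsub, forall_and,
    forall_aeval_sumElim_eq_zero_iff, Set.mem_union, or_imp, Set.forall_mem_range, coeffs]

theorem le_ker_aeval_of_mem_Vcx {I : Ideal (MvPolynomial (Fin m) K)} {b : Fin m → ℂ}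
    (hb : b ∈ Vcx K m I) : I ≤ RingHom.ker (aeval (R := K) b) := fun p hp => by
  rw [RingHom.mem_ker, ← hb p hp, eval_map, aeval_def]

theorem isAlgebraic_of_mem_Vcx_of_aeval_eq_zero [FiniteDimensional ℚ K]
    {I : Ideal (MvPolynomial (Fin m) K)} (hI : I.IsPrime)
    (hdim : ringKrullDim (MvPolynomial (Fin m) K ⧸ I) ≤ 1) {b : Fin m → ℂ} (hb : b ∈ Vcx K m I)
    {e : MvPolynomial (Fin m) K} (heI : e ∉ I) (heb : aeval b e = 0) (i : Fin m) :
    IsAlgebraic ℚ (b i) := by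
  have hlt : I < RingHom.ker (aeval (R := K) b) :=
    lt_of_le_of_ne (le_ker_aeval_of_mem_Vcx hb) fun h => heI (h ▸ heb)
  have hmax := hI.isMaximal_of_lt_of_ringKrullDim_quotient_le_one hdim (RingHom.ker_isPrime _) hlt
  have hK : IsIntegral K (b i) := by
    simpa using isIntegral_aeval_of_isMaximal_ker b hmax (X i)
  exact (isIntegral_trans (R := ℚ) _ hK).isAlgebraic

end Parameters

/-- For two dynamically independent families, the set of parameters at which the two
specializations share a common iterate is countable. -/
theorem common_iterate_parameters_countable (K : IntermediateField ℚ ℂ)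
    [FiniteDimensional ℚ K] (m : ℕ) (I : Ideal (MvPolynomial (Fin m) K))
    (hI : I.IsPrime) (hdim : ringKrullDim (MvPolynomial (Fin m) K ⧸ I) = 1)
    (f g : RegFamily K m I) (hind : DynIndependent f g) :
    {b | b ∈ Vcx K m I ∧
      ∃ n k : ℕ, 1 ≤ n ∧ 1 ≤ k ∧ (famMap f b)^[n] = (famMap g b)^[k]}.Countable := by
  refine (Set.countable_pi fun _ : Fin m => Algebraic.countable ℚ ℂ).mono ?_
  rintro b ⟨hb, n, k, hn, hk, hiter⟩
  obtain ⟨S, hS⟩ := exists_polynomials_iterate_eq_iff f.P f.Q g.P g.Q n k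
  obtain ⟨b₀, hb₀, hne⟩ : ∃ b₀ ∈ Vcx K m I, (famMap f b₀)^[n] ≠ (famMap g b₀)^[k] := by
    by_contra! h
    exact hind ⟨n, k, hn, hk, h⟩
  obtain ⟨e, heS, he⟩ : ∃ e ∈ S, aeval b₀ e ≠ 0 := by
    by_contra! h
    exact hne ((hS b₀).mpr h)
  have heI : e ∉ I := fun heI => he (le_ker_aeval_of_mem_Vcx hb₀ heI)
  exact isAlgebraic_of_mem_Vcx_of_aeval_eq_zero hI hdim.le hb heI ((hS b).mp hiter e heS)
end
end

section
/- Let f be a regular polynomial automorphism of ℂ² of degree d. Then deg(fⁿ) = dⁿ for every integer n ≥ 1; in particular the first dynamical degree λ(f) = lim_{n→∞} (deg fⁿ)^{1/n} equals d > 1. -/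
/-!
Write `d = deg f`, `e = deg f⁻¹`, and `f_d`, `f⁻¹_e` for their top-degree parts. Since top parts
compose, the degree-`de` part of `f⁻¹ ∘ f = id` gives `f⁻¹_e ∘ f_d = 0`. As `ℂ` is algebraically
closed, a nonzero binary form vanishing at `(u, v)` forces `u, v` to be proportional, so
`f_d = (a H, b H)` and `f⁻¹_e(a, b) = 0`. Regularity then says `H(a, b) ≠ 0`, and by induction the
top part of `fⁿ⁺¹ = f ∘ fⁿ` is `(a uₙ₊₁, b uₙ₊₁)` with `uₙ₊₁ = H(a, b) uₙ^d ≠ 0` of degree `dⁿ⁺¹`.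
-/

open MvPolynomial Filter

noncomputable section

namespace MvPolynomial

section TopComponent

variable {σ τ R : Type*} [CommSemiring R]

theorem homogeneousComponent_add_mul {p q : MvPolynomial σ R} {m n : ℕ}
    (hp : p.totalDegree ≤ m) (hq : q.totalDegree ≤ n) :
    homogeneousComponent (m + n) (p * q) =
      homogeneousComponent m p * homogeneousComponent n q := by
  classical
  ext μ
  rw [coeff_homogeneousComponent]
  split_ifs with hμ
  · rw [coeff_mul, coeff_mul]
    refine Finset.sum_congr rfl fun x hx => ?_
    simp only [coeff_homogeneousComponent]
    by_cases hx₁ : coeff x.1 p = 0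
    · simp [hx₁]
    by_cases hx₂ : coeff x.2 q = 0
    · simp [hx₂]
    have h₁ : x.1.degree ≤ m := (le_totalDegree (mem_support_iff.2 hx₁)).trans hp
    have h₂ : x.2.degree ≤ n := (le_totalDegree (mem_support_iff.2 hx₂)).trans hq
    have hsum : x.1.degree + x.2.degree = m + n := by
      rw [← map_add, Finset.HasAntidiagonal.mem_antidiagonal.mp hx, hμ]
    rw [if_pos (by omega), if_pos (by omega)]
  · exact (((homogeneousComponent_isHomogeneous m p).mul
      (homogeneousComponent_isHomogeneous n q)).coeff_eq_zero hμ).symm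

theorem homogeneousComponent_sum_prod {ι : Type*} (s : Finset ι) (p : ι → MvPolynomial σ R)
    (n : ι → ℕ) (hp : ∀ i ∈ s, (p i).totalDegree ≤ n i) :
    homogeneousComponent (∑ i ∈ s, n i) (∏ i ∈ s, p i) =
      ∏ i ∈ s, homogeneousComponent (n i) (p i) := by
  classical
  induction s using Finset.induction_on with
  | empty => simp
  | insert j s hj ih =>
    rw [Finset.sum_insert hj, Finset.prod_insert hj, Finset.prod_insert hj,
      homogeneousComponent_add_mul (hp j (Finset.mem_insert_self j s)),
      ih fun i hi => hp i (Finset.mem_insert_of_mem hi)]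
    exact (totalDegree_finsetProd s p).trans
      (Finset.sum_le_sum fun i hi => hp i (Finset.mem_insert_of_mem hi))

theorem homogeneousComponent_mul_pow {p : MvPolynomial σ R} {e : ℕ} (hp : p.totalDegree ≤ e)
    (k : ℕ) : homogeneousComponent (e * k) (p ^ k) = homogeneousComponent e p ^ k := by
  simpa [mul_comm] using
    homogeneousComponent_sum_prod (Finset.range k) (fun _ => p) (fun _ => e) fun _ _ => hp

theorem homogeneousComponent_totalDegree_ne_zero {p : MvPolynomial σ R} (hp : p ≠ 0) :
    homogeneousComponent p.totalDegree p ≠ 0 := by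
  obtain ⟨s, hs, hdeg⟩ :=
    Finset.exists_mem_eq_sup _ (support_nonempty.2 hp) fun s : σ →₀ ℕ => s.degree
  have hdeg' : s.degree = p.totalDegree := hdeg.symm
  intro h
  have hs' := congrArg (coeff s) h
  rw [coeff_homogeneousComponent, if_pos hdeg', coeff_zero] at hs'
  exact mem_support_iff.1 hs hs'

theorem le_totalDegree_of_homogeneousComponent_ne_zero {p : MvPolynomial σ R} {n : ℕ}
    (h : homogeneousComponent n p ≠ 0) : n ≤ p.totalDegree :=
  not_lt.1 (mt (homogeneousComponent_eq_zero _ _) h)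

variable {g : σ → MvPolynomial τ R} {e : ℕ}

theorem aeval_monomial_eq_C_mul_prod (g : σ → MvPolynomial τ R) (s : σ →₀ ℕ) (c : R) :
    aeval g (monomial s c) = C c * ∏ i ∈ s.support, g i ^ s i := by
  rw [aeval_monomial, algebraMap_eq, Finsupp.prod]

theorem totalDegree_aeval_monomial_le (hg : ∀ i, (g i).totalDegree ≤ e) (s : σ →₀ ℕ) (c : R) :
    (aeval g (monomial s c)).totalDegree ≤ e * s.degree := by
  rw [aeval_monomial_eq_C_mul_prod, Finsupp.degree_apply, Finset.mul_sum]
  refine (totalDegree_mul _ _).trans ?_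
  rw [totalDegree_C, zero_add]
  refine (totalDegree_finsetProd _ _).trans (Finset.sum_le_sum fun i _ => ?_)
  exact (totalDegree_pow _ _).trans (by rw [mul_comm]; exact Nat.mul_le_mul_right _ (hg i))

theorem homogeneousComponent_aeval_monomial (hg : ∀ i, (g i).totalDegree ≤ e) (s : σ →₀ ℕ)
    (c : R) : homogeneousComponent (e * s.degree) (aeval g (monomial s c)) =
      aeval (fun i => homogeneousComponent e (g i)) (monomial s c) := by
  rw [aeval_monomial_eq_C_mul_prod, aeval_monomial_eq_C_mul_prod, homogeneousComponent_C_mul,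
    Finsupp.degree_apply, Finset.mul_sum, homogeneousComponent_sum_prod _ _ _ fun i _ =>
      (totalDegree_pow _ _).trans (by rw [mul_comm]; exact Nat.mul_le_mul_right _ (hg i))]
  simp only [homogeneousComponent_mul_pow (hg _)]

theorem totalDegree_aeval_le (hg : ∀ i, (g i).totalDegree ≤ e) {F : MvPolynomial σ R} {d : ℕ}
    (hF : F.totalDegree ≤ d) : (aeval g F).totalDegree ≤ e * d := by
  rw [F.as_sum, map_sum]
  refine (totalDegree_finsetSum _ _).trans (Finset.sup_le fun s hs => ?_)
  exact (totalDegree_aeval_monomial_le hg s _).trans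
    (Nat.mul_le_mul_left _ ((le_totalDegree hs).trans hF))

theorem homogeneousComponent_aeval (he : 0 < e) (hg : ∀ i, (g i).totalDegree ≤ e)
    {F : MvPolynomial σ R} {d : ℕ} (hF : F.totalDegree ≤ d) :
    homogeneousComponent (e * d) (aeval g F) =
      aeval (fun i => homogeneousComponent e (g i)) (homogeneousComponent d F) := by
  conv_lhs => rw [F.as_sum]
  conv_rhs => rw [F.as_sum]
  simp only [map_sum]
  refine Finset.sum_congr rfl fun s hs => ?_
  have hs : s.degree ≤ d := (le_totalDegree hs).trans hF
  rw [homogeneousComponent_of_mem (isHomogeneous_monomial _ rfl)]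
  split_ifs with hsd
  · rw [hsd, homogeneousComponent_aeval_monomial hg]
  · rw [map_zero]
    refine homogeneousComponent_eq_zero _ _ ((totalDegree_aeval_monomial_le hg s _).trans_lt ?_)
    exact Nat.mul_lt_mul_of_pos_left (lt_of_le_of_ne hs (Ne.symm hsd)) he

end TopComponent

theorem aeval_smul_of_isHomogeneous {σ R A : Type*} [CommSemiring R] [CommSemiring A]
    [Algebra R A] {F : MvPolynomial σ R} {n : ℕ} (hF : F.IsHomogeneous n) (c : A) (x : σ → A) :
    aeval (c • x) F = c ^ n * aeval x F := by
  conv_lhs => rw [F.as_sum]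
  conv_rhs => rw [F.as_sum]
  rw [map_sum, map_sum, Finset.mul_sum]
  refine Finset.sum_congr rfl fun s hs => ?_
  rw [aeval_monomial, aeval_monomial, hF.degree_eq_sum_deg_support hs]
  simp only [Finsupp.prod, Pi.smul_apply, smul_eq_mul, mul_pow, Finset.prod_mul_distrib,
    Finset.prod_pow_eq_pow_sum]
  ring

theorem polynomial_aeval_aeval_X_one {K A : Type*} [CommSemiring K] [CommSemiring A]
    [Algebra K A] (F : MvPolynomial (Fin 2) K) (t : A) :
    Polynomial.aeval t (aeval ![(Polynomial.X : Polynomial K), 1] F) = aeval ![t, 1] F := by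
  rw [← AlgHom.comp_apply, comp_aeval]
  congr
  ext i
  fin_cases i <;> simp

section BinaryForm

variable {K A : Type*} [Field K]

theorem aeval_X_one_ne_zero_of_isHomogeneous [Infinite K] {F : MvPolynomial (Fin 2) K} {n : ℕ}
    (hF : F.IsHomogeneous n) (hF0 : F ≠ 0) : aeval ![(Polynomial.X : Polynomial K), 1] F ≠ 0 := by
  intro h
  have hvanish : ∀ x : Fin 2 → K, eval x (X 1 * F) = eval x 0 := by
    intro x
    by_cases hx : x 1 = 0
    · simp [hx]
    have hx_eq : x = x 1 • ![x 0 / x 1, 1] := by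
      ext i
      fin_cases i <;> simp [mul_div_cancel₀ _ hx]
    have hFx : eval x F = 0 := by
      rw [← aeval_eq_eval, hx_eq, aeval_smul_of_isHomogeneous hF, ← polynomial_aeval_aeval_X_one,
        h, map_zero, mul_zero]
    rw [eval_mul, hFx, mul_zero, map_zero]
  exact hF0 ((mul_eq_zero.1 (MvPolynomial.funext hvanish)).resolve_left (X_ne_zero 1))

theorem exists_eq_smul_of_aeval_eq_zero [IsAlgClosed K] [CommRing A] [IsDomain A]
    [Algebra K A] {F : MvPolynomial (Fin 2) K} {n : ℕ} (hF : F.IsHomogeneous n) (hF0 : F ≠ 0)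
    {u v : A} (h : aeval ![u, v] F = 0) (hv : v ≠ 0) : ∃ r : K, u = r • v := by
  -- `u / v` is a root of the dehomogenization of `F`, hence algebraic over `K`, hence in `K`.
  let L := FractionRing A
  have hinj : Function.Injective (algebraMap A L) := IsFractionRing.injective A L
  have hv' : algebraMap A L v ≠ 0 := (map_ne_zero_iff _ hinj).2 hv
  set t : L := algebraMap A L u / algebraMap A L v
  have huv : (fun i => algebraMap A L (![u, v] i)) = algebraMap A L v • ![t, 1] := by
    ext i
    fin_cases i <;> simp [t, mul_div_cancel₀ _ hv']
  have ht : Polynomial.aeval t (aeval ![(Polynomial.X : Polynomial K), 1] F) = 0 := by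
    have h' := congrArg (IsScalarTower.toAlgHom K A L) h
    rw [← AlgHom.comp_apply, comp_aeval, map_zero] at h'
    simp only [IsScalarTower.coe_toAlgHom', huv, aeval_smul_of_isHomogeneous hF] at h'
    rw [polynomial_aeval_aeval_X_one]
    exact (mul_eq_zero.1 h').resolve_left (pow_ne_zero _ hv')
  obtain ⟨r, hr⟩ : t ∈ (algebraMap K L).range := by
    have hint : IsIntegral K t :=
      IsAlgebraic.isIntegral ⟨_, aeval_X_one_ne_zero_of_isHomogeneous hF hF0, ht⟩
    exact minpoly.mem_range_of_degree_eq_one K t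
      (IsAlgClosed.degree_eq_one_of_irreducible K (minpoly.irreducible hint))
  refine ⟨r, hinj ?_⟩
  rw [Algebra.smul_def, map_mul, ← IsScalarTower.algebraMap_apply, hr, div_mul_cancel₀ _ hv']

end BinaryForm

end MvPolynomial

section PolynomialMapsOfPlane

variable {F R S P Q : Poly2} {d e : ℕ}

theorem totalDegree_pcomp_le (hF : F.totalDegree ≤ d) (hR : R.totalDegree ≤ e)
    (hS : S.totalDegree ≤ e) : (pcomp F R S).totalDegree ≤ e * d :=
  totalDegree_aeval_le (fun i => by fin_cases i <;> assumption) hF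

theorem homogeneousComponent_pcomp (he : 0 < e) (hF : F.totalDegree ≤ d)
    (hR : R.totalDegree ≤ e) (hS : S.totalDegree ≤ e) :
    homogeneousComponent (e * d) (pcomp F R S) =
      pcomp (homogeneousComponent d F) (homogeneousComponent e R) (homogeneousComponent e S) := by
  rw [pcomp, homogeneousComponent_aeval he (fun i => by fin_cases i <;> assumption) hF, pcomp]
  congr
  ext i
  fin_cases i <;> rfl

theorem smul_pcomp (c : ℂ) (F R S : Poly2) : pcomp (c • F) R S = c • pcomp F R S :=
  map_smul _ c F

theorem pcomp_smul_smul_of_isHomogeneous (hF : F.IsHomogeneous d) (a b : ℂ) (u : Poly2) :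
    pcomp F (a • u) (b • u) = eval ![a, b] F • u ^ d := by
  have huv : ![a • u, b • u] = u • fun i => (C (![a, b] i) : Poly2) := by
    ext i
    fin_cases i <;> simp [smul_eq_C_mul, mul_comm]
  have hC : aeval (fun i => (C (![a, b] i) : Poly2)) F = C (eval ![a, b] F) := by
    rw [← algebraMap_eq, ← Algebra.ofId_apply, ← aeval_eq_eval, ← AlgHom.comp_apply, comp_aeval]
    rfl
  rw [pcomp, huv, aeval_smul_of_isHomogeneous hF, hC, smul_eq_C_mul, mul_comm]

theorem eval_eq_zero_of_pcomp_smul_smul_eq_zero (hF : F.IsHomogeneous d) {a b : ℂ} {u : Poly2}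
    (hu : u ≠ 0) (h : pcomp F (a • u) (b • u) = 0) : eval ![a, b] F = 0 :=
  (smul_eq_zero.1 ((pcomp_smul_smul_of_isHomogeneous hF a b u).symm.trans h)).resolve_right
    (pow_ne_zero _ hu)

theorem pcomp_eq_X_of_isInverseQuad {P' Q' : Poly2} (h : IsInverseQuad P Q P' Q') :
    pcomp P' P Q = X 0 ∧ pcomp Q' P Q = X 1 := by
  have key : ∀ x : Fin 2 → ℂ, eval x (pcomp P' P Q) = x 0 ∧ eval x (pcomp Q' P Q) = x 1 := by
    intro x
    have hx : ![x 0, x 1] = x := by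
      ext i
      fin_cases i <;> rfl
    have hinv := Prod.ext_iff.1 (h.1 (x 0, x 1))
    simp only [evalPair, hx] at hinv
    have hcomp : (fun i => eval x (![P, Q] i)) = ![eval x P, eval x Q] := by
      ext i
      fin_cases i <;> rfl
    simp only [pcomp, ← aeval_eq_eval, ← AlgHom.comp_apply, comp_aeval]
    simpa only [aeval_eq_eval, hcomp] using hinv
  exact ⟨funext fun x => by simpa using (key x).1, funext fun x => by simpa using (key x).2⟩

theorem pcomp_X_X (F : Poly2) : pcomp F (X 0) (X 1) = F := by
  have hX : ![X 0, X 1] = (X : Fin 2 → Poly2) := by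
    ext i
    fin_cases i <;> rfl
  rw [pcomp, hX, aeval_X_left_apply]

theorem iterPair_one : iterPair P Q 1 = (P, Q) := by
  simp only [iterPair, pcomp_X_X]

theorem homogeneousComponent_degPair_ne_zero (h : 1 ≤ degPair P Q) :
    homogeneousComponent (degPair P Q) P ≠ 0 ∨ homogeneousComponent (degPair P Q) Q ≠ 0 := by
  rcases max_choice P.totalDegree Q.totalDegree with hmax | hmax
  · have hP : degPair P Q = P.totalDegree := hmax
    rw [hP] at h ⊢
    exact Or.inl (homogeneousComponent_totalDegree_ne_zero (by rintro rfl; simp at h))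
  · have hQ : degPair P Q = Q.totalDegree := hmax
    rw [hQ] at h ⊢
    exact Or.inr (homogeneousComponent_totalDegree_ne_zero (by rintro rfl; simp at h))

theorem pcomp_homogeneousComponent_eq_zero_of_pcomp_eq_X {G : Poly2} {i : Fin 2} (hd : 2 ≤ d)
    (he : 1 ≤ e) (hG : G.totalDegree ≤ e) (hP : P.totalDegree ≤ d) (hQ : Q.totalDegree ≤ d)
    (h : pcomp G P Q = X i) :
    pcomp (homogeneousComponent e G) (homogeneousComponent d P) (homogeneousComponent d Q) = 0 := by
  rw [← homogeneousComponent_pcomp (by omega) hG hP hQ, h]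
  exact homogeneousComponent_eq_zero _ _ (by rw [totalDegree_X]; nlinarith)

theorem exists_eq_smul_smul_of_pcomp_eq_zero {G u v : Poly2} (hG : G.IsHomogeneous e)
    (hG0 : G ≠ 0) (hu : u.IsHomogeneous d) (hv : v.IsHomogeneous d) (h : pcomp G u v = 0) :
    ∃ (a b : ℂ) (w : Poly2), (a, b) ≠ 0 ∧ w.IsHomogeneous d ∧ u = a • w ∧ v = b • w := by
  by_cases hv0 : v = 0
  · exact ⟨1, 0, u, by simp, hu, by simp, by simp [hv0]⟩
  · obtain ⟨r, hr⟩ := exists_eq_smul_of_aeval_eq_zero hG hG0 h hv0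
    exact ⟨r, 1, v, by simp, hv, hr, by simp⟩

/-- The degree-`d` part of `(P, Q)` contracts the line at infinity to the point `[a : b]`. -/
def HasTopPart (P Q : Poly2) (d : ℕ) (a b : ℂ) (u : Poly2) : Prop :=
  P.totalDegree ≤ d ∧ Q.totalDegree ≤ d ∧
    homogeneousComponent d P = a • u ∧ homogeneousComponent d Q = b • u

theorem HasTopPart.pcomp {a b : ℂ} {H u : Poly2} {k : ℕ} (hPQ : HasTopPart P Q d a b H)
    (hH : H.IsHomogeneous d) (hk : 0 < k) (hRS : HasTopPart R S k a b u) :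
    HasTopPart (pcomp P R S) (pcomp Q R S) (k * d) a b (eval ![a, b] H • u ^ d) := by
  obtain ⟨hP, hQ, hPd, hQd⟩ := hPQ
  obtain ⟨hR, hS, hRk, hSk⟩ := hRS
  refine ⟨totalDegree_pcomp_le hP hR hS, totalDegree_pcomp_le hQ hR hS, ?_, ?_⟩
  · rw [homogeneousComponent_pcomp hk hP hR hS, hPd, hRk, hSk, smul_pcomp,
      pcomp_smul_smul_of_isHomogeneous hH]
  · rw [homogeneousComponent_pcomp hk hQ hR hS, hQd, hRk, hSk, smul_pcomp,
      pcomp_smul_smul_of_isHomogeneous hH]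

theorem HasTopPart.degPair_eq {a b : ℂ} {u : Poly2} (h : HasTopPart P Q d a b u)
    (hab : (a, b) ≠ 0) (hu : u ≠ 0) : degPair P Q = d := by
  obtain ⟨hP, hQ, hPd, hQd⟩ := h
  refine le_antisymm (max_le hP hQ) ?_
  by_cases ha : a = 0
  · have hb : b ≠ 0 := fun hb => hab (by simp [ha, hb])
    exact (le_totalDegree_of_homogeneousComponent_ne_zero
      (by rw [hQd]; exact smul_ne_zero hb hu)).trans (le_max_right _ _)
  · exact (le_totalDegree_of_homogeneousComponent_ne_zero
      (by rw [hPd]; exact smul_ne_zero ha hu)).trans (le_max_left _ _)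

theorem hasTopPart_iterPair {a b : ℂ} {H : Poly2} (hPQ : HasTopPart P Q d a b H)
    (hH : H.IsHomogeneous d) (hH0 : H ≠ 0) (hHab : eval ![a, b] H ≠ 0) (hd : 0 < d) (n : ℕ)
    (hn : 1 ≤ n) : ∃ u ≠ 0, HasTopPart (iterPair P Q n).1 (iterPair P Q n).2 (d ^ n) a b u := by
  induction n, hn using Nat.le_induction with
  | base => exact ⟨H, hH0, by rwa [iterPair_one, pow_one]⟩
  | succ n _ ih =>
    obtain ⟨u, hu0, hu⟩ := ih
    exact ⟨_, smul_ne_zero hHab (pow_ne_zero _ hu0),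
      pow_succ d n ▸ hPQ.pcomp hH (pow_pos hd n) hu⟩

end PolynomialMapsOfPlane

theorem exists_hasTopPart_of_isRegularQuad {P Q P' Q' : Poly2} (hinv : IsInverseQuad P Q P' Q')
    (hreg : IsRegularQuad P Q P' Q') :
    ∃ (a b : ℂ) (H : Poly2), (a, b) ≠ 0 ∧ H ≠ 0 ∧ H.IsHomogeneous (degPair P Q) ∧
      eval ![a, b] H ≠ 0 ∧ HasTopPart P Q (degPair P Q) a b H := by
  obtain ⟨hd, he, hreg⟩ := hreg
  set d := degPair P Q
  set e := degPair P' Q'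
  have hP : P.totalDegree ≤ d := le_max_left _ _
  have hQ : Q.totalDegree ≤ d := le_max_right _ _
  obtain ⟨hP'PQ, hQ'PQ⟩ := pcomp_eq_X_of_isInverseQuad hinv
  have hP'top := pcomp_homogeneousComponent_eq_zero_of_pcomp_eq_X hd (by omega : 1 ≤ e)
    (le_max_left _ _) hP hQ hP'PQ
  have hQ'top := pcomp_homogeneousComponent_eq_zero_of_pcomp_eq_X hd (by omega : 1 ≤ e)
    (le_max_right _ _) hP hQ hQ'PQ
  obtain ⟨a, b, H, hab, hH, hPd, hQd⟩ : ∃ (a b : ℂ) (H : Poly2), (a, b) ≠ 0 ∧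
      H.IsHomogeneous d ∧ homogeneousComponent d P = a • H ∧ homogeneousComponent d Q = b • H := by
    rcases homogeneousComponent_degPair_ne_zero (P := P') (Q := Q') (by omega) with h | h
    · exact exists_eq_smul_smul_of_pcomp_eq_zero (homogeneousComponent_isHomogeneous _ _) h
        (homogeneousComponent_isHomogeneous _ _) (homogeneousComponent_isHomogeneous _ _) hP'top
    · exact exists_eq_smul_smul_of_pcomp_eq_zero (homogeneousComponent_isHomogeneous _ _) h
        (homogeneousComponent_isHomogeneous _ _) (homogeneousComponent_isHomogeneous _ _) hQ'top
  have hH0 : H ≠ 0 := by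
    rintro rfl
    rcases homogeneousComponent_degPair_ne_zero (P := P) (Q := Q) (by omega) with h | h
    · exact h (by rw [hPd, smul_zero])
    · exact h (by rw [hQd, smul_zero])
  refine ⟨a, b, H, hab, hH0, hH, fun hHab => hreg a b hab ⟨?_, ?_, ?_, ?_⟩, hP, hQ, hPd, hQd⟩
  · simp [evalHom, hPd, hHab]
  · simp [evalHom, hQd, hHab]
  -- the top part of `f⁻¹` vanishes at the image `[a : b]` of the line at infinity
  · exact eval_eq_zero_of_pcomp_smul_smul_eq_zero (homogeneousComponent_isHomogeneous e P') hH0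
      (hPd ▸ hQd ▸ hP'top)
  · exact eval_eq_zero_of_pcomp_smul_smul_eq_zero (homogeneousComponent_isHomogeneous e Q') hH0
      (hPd ▸ hQd ▸ hQ'top)

/-- For a regular polynomial automorphism `f` of `ℂ²` of degree `d`, one has `deg fⁿ = dⁿ`
for all `n ≥ 1`; in particular the first dynamical degree equals `d > 1`. -/
theorem degree_iterates_regular (P Q P' Q' : Poly2)
    (hinv : IsInverseQuad P Q P' Q') (hreg : IsRegularQuad P Q P' Q') :
    (∀ n : ℕ, 1 ≤ n → degIter P Q n = degPair P Q ^ n) ∧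
    Tendsto (fun n : ℕ => (degIter P Q n : ℝ) ^ ((n : ℝ)⁻¹)) atTop
      (nhds (degPair P Q : ℝ)) ∧
    1 < degPair P Q := by
  have hd : 2 ≤ degPair P Q := hreg.1
  obtain ⟨a, b, H, hab, hH0, hH, hHab, hPQ⟩ := exists_hasTopPart_of_isRegularQuad hinv hreg
  have hdeg : ∀ n : ℕ, 1 ≤ n → degIter P Q n = degPair P Q ^ n := fun n hn => by
    obtain ⟨u, hu0, hu⟩ := hasTopPart_iterPair hPQ hH hH0 hHab (by omega) n hn
    exact hu.degPair_eq hab hu0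
  refine ⟨hdeg, tendsto_const_nhds.congr' ?_, by omega⟩
  filter_upwards [eventually_ge_atTop 1] with n hn
  rw [hdeg n hn, Nat.cast_pow, Real.pow_rpow_inv_natCast (Nat.cast_nonneg _) (by omega)]
end
end
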